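/- Let N ≥ 2, s ∈ (0,1), γ > 0. There exists a unique β ∈ 𝔅 = {b ∈ ℝ^N : b_1 < ... < b_N} solving β_i = ((1+2s)γ)/(2s) · Σ_{j≠i} (β_i - β_j)/|β_i - β_j|^{1+2s} for every i = 1,...,N. Moreover this β satisfies the symmetry β_i = -β_{N-i+1} for all i. -/

import Mathlib

open Real Finset

open Topology Filter

/-- Pairwise potential whose derivative is `-c * t^(-σ)` on `t > 0`. -/
noncomputable def flW (c σ t : ℝ) : ℝ :=
  if σ = 1 then -c * Real.log t else (c/(1-σ)) * (1 - t ^ (1-σ))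

lemma W_hasDerivAt (c σ : ℝ) {t : ℝ} (ht : 0 < t) :
    HasDerivAt (flW c σ) (-c * t ^ (-σ)) t := by
  unfold flW
  split_ifs with h
  · subst h
    have h1 := (Real.hasDerivAt_log (ne_of_gt ht)).const_mul (-c)
    rw [Real.rpow_neg_one]
    exact h1
  · have h1 : HasDerivAt (fun x : ℝ => x ^ (1-σ)) ((1-σ) * t ^ ((1-σ)-1)) t :=
      Real.hasDerivAt_rpow_const (Or.inl (ne_of_gt ht))
    have h2 := (h1.const_sub 1).const_mul (c/(1-σ))
    refine h2.congr_deriv ?_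
    have h3 : (1:ℝ) - σ ≠ 0 := sub_ne_zero.mpr (Ne.symm h)
    rw [show (1-σ)-1 = -σ by ring]
    field_simp

lemma flW_lower (c σ : ℝ) (hc : 0 < c) (hσ : 0 < σ) :
    ∃ B : ℝ, 0 < B ∧ ∀ t : ℝ, 0 < t → -B * (1 + t) ≤ flW c σ t := by
  rcases lt_trichotomy σ 1 with h | h | h
  · refine ⟨c/(1-σ), div_pos hc (by linarith), fun t ht => ?_⟩
    have hb : t ^ (1-σ) ≤ 1 + t := by
      rcases le_total t 1 with h1 | h1
      · have := Real.rpow_le_one ht.le h1 (by linarith : (0:ℝ) ≤ 1 - σ)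
        linarith
      · have h2 : t ^ (1-σ) ≤ t ^ (1:ℝ) :=
          Real.rpow_le_rpow_of_exponent_le h1 (by linarith)
        rw [Real.rpow_one] at h2; linarith
    have hB : 0 < c/(1-σ) := div_pos hc (by linarith)
    rw [flW, if_neg (by linarith : σ ≠ 1)]
    nlinarith [Real.rpow_nonneg ht.le (1-σ)]
  · subst h
    refine ⟨c, hc, fun t ht => ?_⟩
    rw [flW, if_pos rfl]
    have := Real.log_le_sub_one_of_pos ht
    nlinarith
  · refine ⟨c/(σ-1), div_pos hc (by linarith), fun t ht => ?_⟩
    have hB : 0 < c/(σ-1) := div_pos hc (by linarith)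
    rw [flW, if_neg (by linarith : σ ≠ 1)]
    have h1 : (0:ℝ) ≤ t ^ (-(σ-1)) := Real.rpow_nonneg ht.le _
    rw [show (1:ℝ)-σ = -(σ-1) by ring, div_neg]
    nlinarith

/-- `t / |t|^(1+σ) = t^(-σ)` for `t > 0`. -/
lemma fl_pos (σ : ℝ) {t : ℝ} (ht : 0 < t) : t / |t| ^ (1+σ) = t ^ (-σ) := by
  rw [abs_of_pos ht]
  have h := Real.rpow_sub ht 1 (1+σ)
  rw [Real.rpow_one, show (1:ℝ) - (1+σ) = -σ by ring] at h
  rw [h]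

lemma fl_neg (σ t : ℝ) : (-t) / |(-t)| ^ (1+σ) = -(t / |t| ^ (1+σ)) := by
  rw [abs_neg, neg_div]

/-- The value function. -/
noncomputable def Vfun (N : ℕ) (c σ : ℝ) (x : Fin N → ℝ) : ℝ :=
  (∑ i, (x i)^2)/2 + ∑ i, ∑ j ∈ univ.filter (fun j => i < j), flW c σ (x j - x i)

lemma haff (a b : ℝ) : HasDerivAt (fun t : ℝ => a + t * b) b 0 := by
  simpa using ((hasDerivAt_id (0:ℝ)).mul_const b).const_add a

lemma V_hasDerivAt (N : ℕ) (c σ : ℝ) (x v : Fin N → ℝ)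
    (hx : ∀ i j : Fin N, i < j → 0 < x j - x i) :
    HasDerivAt (fun t : ℝ => Vfun N c σ (x + t • v))
      ((∑ i, x i * v i) +
        ∑ i, ∑ j ∈ univ.filter (fun j => i < j), (-c * (x j - x i) ^ (-σ)) * (v j - v i)) 0 := by
  have hfun : (fun t : ℝ => Vfun N c σ (x + t • v)) =
      fun t : ℝ => (∑ i, (x i + t * v i)^2)/2 +
        ∑ i, ∑ j ∈ univ.filter (fun j => i < j),
          flW c σ ((x j + t * v j) - (x i + t * v i)) := by
    funext t
    simp [Vfun, Pi.add_apply, Pi.smul_apply, smul_eq_mul]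
  rw [hfun]
  have hq : HasDerivAt (fun t : ℝ => (∑ i, (x i + t * v i)^2)/2) (∑ i, x i * v i) 0 := by
    have h1 : HasDerivAt (fun t : ℝ => ∑ i, (x i + t * v i)^2)
        (∑ i : Fin N, 2 * (x i + 0 * v i)^1 * v i) 0 :=
      HasDerivAt.fun_sum (fun i _ => (haff (x i) (v i)).pow 2)
    have h2 := h1.div_const 2
    refine h2.congr_deriv ?_
    rw [Finset.sum_div]
    refine Finset.sum_congr rfl (fun i _ => ?_)
    simp
    ring
  have hp : HasDerivAt (fun t : ℝ => ∑ i, ∑ j ∈ univ.filter (fun j => i < j),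
      flW c σ ((x j + t * v j) - (x i + t * v i)))
      (∑ i, ∑ j ∈ univ.filter (fun j => i < j), (-c * (x j - x i) ^ (-σ)) * (v j - v i)) 0 := by
    refine HasDerivAt.fun_sum (fun i _ => HasDerivAt.fun_sum (fun j hj => ?_))
    have hij : i < j := by simpa using hj
    have hin : HasDerivAt (fun t : ℝ => (x j + t * v j) - (x i + t * v i)) (v j - v i) 0 :=
      (haff (x j) (v j)).sub (haff (x i) (v i))
    have hg : 0 < (x j + 0 * v j) - (x i + 0 * v i) := by
      simpa using hx i j hij
    have hW := (W_hasDerivAt c σ hg).comp 0 hin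
    exact hW.congr_deriv (by simp)
  exact hq.add hp

lemma erase_split (N : ℕ) (i : Fin N) (F : Fin N → ℝ) :
    ∑ j ∈ univ.erase i, F j =
      (∑ j ∈ univ.filter (fun j => j < i), F j) + ∑ j ∈ univ.filter (fun j => i < j), F j := by
  rw [← Finset.sum_union]
  · refine Finset.sum_congr ?_ (fun _ _ => rfl)
    ext j
    simp only [Finset.mem_union, Finset.mem_filter, Finset.mem_univ, true_and,
      Finset.mem_erase, and_true]
    constructor
    · exact fun h => h.lt_or_gt
    · rintro (h | h)
      exacts [ne_of_lt h, ne_of_gt h]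
  · rw [Finset.disjoint_left]
    intro a ha hb
    simp only [Finset.mem_filter] at ha hb
    exact absurd (ha.2.trans hb.2) (lt_irrefl a)

lemma double_swap (N : ℕ) (t : Fin N → Fin N → ℝ) :
    ∑ i, ∑ j ∈ univ.filter (fun j => j < i), t i j =
      ∑ i, ∑ j ∈ univ.filter (fun j => i < j), t j i := by
  rw [Finset.sum_comm' (t' := univ) (s' := fun j => univ.filter (fun i => j < i))]
  intro i j
  simp [and_comm]

lemma sym_sum (N : ℕ) (t : Fin N → Fin N → ℝ) :
    ∑ i, ∑ j ∈ univ.erase i, t i j =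
      ∑ i, ∑ j ∈ univ.filter (fun j => i < j), (t i j + t j i) := by
  calc ∑ i, ∑ j ∈ univ.erase i, t i j
      = ∑ i, ((∑ j ∈ univ.filter (fun j => j < i), t i j) +
          ∑ j ∈ univ.filter (fun j => i < j), t i j) :=
        Finset.sum_congr rfl (fun i _ => erase_split N i _)
    _ = (∑ i, ∑ j ∈ univ.filter (fun j => j < i), t i j) +
          ∑ i, ∑ j ∈ univ.filter (fun j => i < j), t i j := Finset.sum_add_distrib
    _ = (∑ i, ∑ j ∈ univ.filter (fun j => i < j), t j i) +
          ∑ i, ∑ j ∈ univ.filter (fun j => i < j), t i j := by rw [double_swap]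
    _ = _ := by rw [← Finset.sum_add_distrib]
                refine Finset.sum_congr rfl (fun i _ => ?_)
                rw [← Finset.sum_add_distrib]
                exact Finset.sum_congr rfl (fun j _ => add_comm _ _)

/-- Uniqueness of strictly monotone solutions. -/
lemma uniq_sol (N : ℕ) (c σ : ℝ) (hc : 0 < c) (hσ : 0 < σ) (β β' : Fin N → ℝ)
    (hm : StrictMono β) (hm' : StrictMono β')
    (heq : ∀ i, β i = c * ∑ j ∈ univ.erase i, (β i - β j) / |β i - β j| ^ (1+σ))
    (heq' : ∀ i, β' i = c * ∑ j ∈ univ.erase i, (β' i - β' j) / |β' i - β' j| ^ (1+σ)) :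
    β' = β := by
  set x : Fin N → ℝ := fun i => β' i - β i with hx
  have key : ∑ i, (x i)^2 ≤ 0 := by
    have h1 : ∑ i, (x i)^2 = c * ∑ i, ∑ j ∈ univ.erase i,
        x i * ((β' i - β' j) / |β' i - β' j| ^ (1+σ) - (β i - β j) / |β i - β j| ^ (1+σ)) := by
      rw [Finset.mul_sum]
      refine Finset.sum_congr rfl (fun i _ => ?_)
      have hR : ∑ j ∈ univ.erase i,
          x i * ((β' i - β' j) / |β' i - β' j| ^ (1+σ) - (β i - β j) / |β i - β j| ^ (1+σ))
          = x i * ((∑ j ∈ univ.erase i, (β' i - β' j) / |β' i - β' j| ^ (1+σ)) -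
              ∑ j ∈ univ.erase i, (β i - β j) / |β i - β j| ^ (1+σ)) := by
        rw [← Finset.mul_sum, Finset.sum_sub_distrib]
      rw [hR]
      simp only [hx]
      linear_combination (β' i - β i) * heq' i - (β' i - β i) * heq i
    rw [h1, sym_sum]
    have h2 : ∀ i j : Fin N, i < j →
        (x i * ((β' i - β' j) / |β' i - β' j| ^ (1+σ) - (β i - β j) / |β i - β j| ^ (1+σ)) +
         x j * ((β' j - β' i) / |β' j - β' i| ^ (1+σ) - (β j - β i) / |β j - β i| ^ (1+σ))) ≤ 0 := by
      intro i j hij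
      set g : ℝ := β j - β i with hg
      set g' : ℝ := β' j - β' i with hg'
      have hgpos : 0 < g := sub_pos.mpr (hm hij)
      have hg'pos : 0 < g' := sub_pos.mpr (hm' hij)
      have e1 : (β i - β j) / |β i - β j| ^ (1+σ) = -(g ^ (-σ)) := by
        rw [show β i - β j = -g by rw [hg]; ring, fl_neg, fl_pos σ hgpos]
      have e2 : (β' i - β' j) / |β' i - β' j| ^ (1+σ) = -(g' ^ (-σ)) := by
        rw [show β' i - β' j = -g' by rw [hg']; ring, fl_neg, fl_pos σ hg'pos]
      have e3 : (β j - β i) / |β j - β i| ^ (1+σ) = g ^ (-σ) := fl_pos σ hgpos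
      have e4 : (β' j - β' i) / |β' j - β' i| ^ (1+σ) = g' ^ (-σ) := fl_pos σ hg'pos
      rw [e1, e2, e3, e4]
      have hxx : x i - x j = g - g' := by rw [hx, hg, hg']; ring
      have step : (g - g') * (g ^ (-σ) - g' ^ (-σ)) ≤ 0 := by
        rcases le_total g g' with h | h
        · have := Real.rpow_le_rpow_of_nonpos hgpos h (by linarith : -σ ≤ 0)
          nlinarith
        · have := Real.rpow_le_rpow_of_nonpos hg'pos h (by linarith : -σ ≤ 0)
          nlinarith
      have hE : x i * (-(g' ^ (-σ)) - -(g ^ (-σ))) + x j * (g' ^ (-σ) - g ^ (-σ)) =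
          (g - g') * (g ^ (-σ) - g' ^ (-σ)) := by
        linear_combination (g ^ (-σ) - g' ^ (-σ)) * hxx
      linarith [hE, step]
    have h3 : ∑ i, ∑ j ∈ univ.filter (fun j => i < j),
        (x i * ((β' i - β' j) / |β' i - β' j| ^ (1+σ) - (β i - β j) / |β i - β j| ^ (1+σ)) +
         x j * ((β' j - β' i) / |β' j - β' i| ^ (1+σ) - (β j - β i) / |β j - β i| ^ (1+σ))) ≤ 0 := by
      refine Finset.sum_nonpos (fun i _ => Finset.sum_nonpos (fun j hj => ?_))
      exact h2 i j (by simpa using hj)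
    exact mul_nonpos_of_nonneg_of_nonpos hc.le h3 |>.trans_eq' rfl
  have hz : ∀ i, x i = 0 := by
    intro i
    have hnn : ∀ j ∈ (univ : Finset (Fin N)), (0:ℝ) ≤ (x j)^2 := fun j _ => sq_nonneg _
    have := (Finset.sum_eq_zero_iff_of_nonneg hnn).mp (le_antisymm key (Finset.sum_nonneg hnn))
    exact pow_eq_zero_iff (n := 2) (by norm_num) |>.mp (this i (Finset.mem_univ i))
  funext i
  have := hz i
  rw [hx] at this
  dsimp at this
  linarith [this]

lemma coerc (N : ℕ) (hN : 0 < N) (c σ B : ℝ) (hB : 0 < B)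
    (hfl : ∀ t : ℝ, 0 < t → -B * (1+t) ≤ flW c σ t) (x : Fin N → ℝ)
    (hx : ∀ i j : Fin N, i < j → 0 < x j - x i) :
    (∑ i, |x i|)^2/(2*N) - B*N^2*(1+2*∑ i, |x i|) ≤ Vfun N c σ x := by
  set M : ℝ := ∑ i, |x i| with hM
  have hM0 : 0 ≤ M := Finset.sum_nonneg (fun i _ => abs_nonneg _)
  have habs : ∀ k : Fin N, |x k| ≤ M :=
    fun k => Finset.single_le_sum (fun i _ => abs_nonneg (x i)) (Finset.mem_univ k)
  have h1 : M^2 ≤ (N:ℝ) * ∑ i, (x i)^2 := by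
    have := sq_sum_le_card_mul_sum_sq (s := (univ : Finset (Fin N)))
      (f := fun i => |x i|)
    simpa [sq_abs, Finset.card_univ] using this
  have hq : M^2/(2*N) ≤ (∑ i, (x i)^2)/2 := by
    rw [div_le_div_iff₀ (by positivity) (by norm_num)]
    nlinarith [h1]
  have h2 : ∀ i j : Fin N, i < j → -B*(1+2*M) ≤ flW c σ (x j - x i) := by
    intro i j hij
    have hg := hx i j hij
    have hgM : x j - x i ≤ 2*M := by
      have := habs i; have := habs j
      have h3 := abs_sub (x j) (x i)
      calc x j - x i ≤ |x j - x i| := le_abs_self _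
        _ ≤ |x j| + |x i| := abs_sub _ _
        _ ≤ 2*M := by linarith [habs i, habs j]
    calc -B*(1+2*M) ≤ -B*(1 + (x j - x i)) := by nlinarith
      _ ≤ flW c σ (x j - x i) := hfl _ hg
  have h3 : -(B*N^2*(1+2*M)) ≤ ∑ i, ∑ j ∈ univ.filter (fun j => i < j), flW c σ (x j - x i) := by
    have hconst : (0:ℝ) ≤ B*(1+2*M) := by positivity
    have hinner : ∀ i : Fin N, -((N:ℝ) * (B*(1+2*M))) ≤
        ∑ j ∈ univ.filter (fun j => i < j), flW c σ (x j - x i) := by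
      intro i
      have hlo : ∑ j ∈ univ.filter (fun j => i < j), (-(B*(1+2*M))) ≤
          ∑ j ∈ univ.filter (fun j => i < j), flW c σ (x j - x i) := by
        refine Finset.sum_le_sum (fun j hj => ?_)
        have hij : i < j := by simpa using hj
        have := h2 i j hij
        linarith
      have hcard : ((univ.filter (fun j => i < j)).card : ℝ) ≤ N := by
        have := Finset.card_filter_le (univ : Finset (Fin N)) (fun j => i < j)
        have hN' : (univ : Finset (Fin N)).card = N := by simp
        exact_mod_cast hN' ▸ this
      rw [Finset.sum_const, nsmul_eq_mul] at hlo
      nlinarith [hlo, hcard]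
    calc -(B*N^2*(1+2*M)) = ∑ _i : Fin N, -((N:ℝ) * (B*(1+2*M))) := by
          rw [Finset.sum_const, nsmul_eq_mul, Finset.card_univ, Fintype.card_fin]; ring
      _ ≤ _ := Finset.sum_le_sum (fun i _ => hinner i)
  rw [Vfun]
  have := hq
  linarith [h3, hq]

set_option maxHeartbeats 1000000 in
lemma exists_sol (N : ℕ) (hN : 2 ≤ N) (c σ : ℝ) (hc : 0 < c) (hσ : 0 < σ) :
    ∃ β : Fin N → ℝ, StrictMono β ∧
      ∀ i, β i = c * ∑ j ∈ univ.erase i, (β i - β j) / |β i - β j| ^ (1+σ) := by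
  obtain ⟨B, hB, hflW⟩ := flW_lower c σ hc hσ
  have hN0 : 0 < N := by omega
  have hN1 : (1:ℝ) ≤ N := by exact_mod_cast hN0
  set b₀ : Fin N → ℝ := fun i => ((i : ℕ) : ℝ) with hb₀def
  set E : ℝ := Vfun N c σ b₀ with hEdef
  set P : ℝ := 2*N*|E| + 2*N*(B*N^2) with hPdef
  set Q : ℝ := 4*N*(B*N^2) with hQdef
  have hP0 : 0 ≤ P := by positivity
  have hQ0 : 0 ≤ Q := by positivity
  set R₀ : ℝ := P + Q + 1 with hR₀def
  have hR₀1 : 1 ≤ R₀ := by linarith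
  set D : ℝ := N*R₀ + c + 1 with hDdef
  have hD0 : 0 < D := by positivity
  have hcD : c < D := by nlinarith
  clear_value E P Q R₀ D
  set ε : ℝ := (c/D) ^ (σ⁻¹ : ℝ) with hεdef
  have hbase : 0 < c/D := div_pos hc hD0
  have hεpos : 0 < ε := Real.rpow_pos_of_pos hbase _
  have hε1 : ε < 1 := Real.rpow_lt_one hbase.le ((div_lt_one hD0).mpr hcD) (by positivity)
  have hεσ : ε ^ σ = c/D := by
    rw [hεdef, ← Real.rpow_mul hbase.le, inv_mul_cancel₀ (ne_of_gt hσ), Real.rpow_one]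
  have hkey : c * ε ^ (-σ) = D := by
    rw [Real.rpow_neg hεpos.le, hεσ]
    field_simp
  clear_value ε
  set R : ℝ := R₀ + N + 2 with hRdef
  have hR0 : 0 ≤ R := by positivity
  clear_value R
  set K : Set (Fin N → ℝ) :=
    {x | (∀ i j : Fin N, i < j → ε ≤ x j - x i) ∧ ∀ k, |x k| ≤ R} with hKdef
  have hb₀K : b₀ ∈ K := by
    constructor
    · intro i j hij
      have h1 : (i:ℕ) + 1 ≤ (j:ℕ) := hij
      have : (1:ℝ) ≤ b₀ j - b₀ i := by
        rw [hb₀def]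
        push_cast
        have : ((i:ℕ):ℝ) + 1 ≤ ((j:ℕ):ℝ) := by exact_mod_cast h1
        linarith
      linarith
    · intro k
      rw [hb₀def]
      have h1 : ((k:ℕ):ℝ) < N := by exact_mod_cast k.isLt
      rw [abs_of_nonneg (by positivity)]
      dsimp only
      linarith
  have hKcl : IsClosed K := by
    have h1 : IsClosed {x : Fin N → ℝ | ∀ i j : Fin N, i < j → ε ≤ x j - x i} := by
      have he : {x : Fin N → ℝ | ∀ i j : Fin N, i < j → ε ≤ x j - x i} =
          ⋂ i, ⋂ j, {x : Fin N → ℝ | i < j → ε ≤ x j - x i} := by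
        ext x; simp [Set.mem_iInter]
      rw [he]
      refine isClosed_iInter fun i => isClosed_iInter fun j => ?_
      by_cases hij : i < j
      · simp only [hij, true_implies]
        exact isClosed_le continuous_const ((continuous_apply j).sub (continuous_apply i))
      · simp only [hij, false_implies, Set.setOf_true]
        exact isClosed_univ
    have h2 : IsClosed {x : Fin N → ℝ | ∀ k, |x k| ≤ R} := by
      have he : {x : Fin N → ℝ | ∀ k, |x k| ≤ R} = ⋂ k, {x : Fin N → ℝ | |x k| ≤ R} := by
        ext x; simp [Set.mem_iInter]
      rw [he]
      exact isClosed_iInter fun k =>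
        isClosed_le ((continuous_apply k).abs) continuous_const
    have : K = {x : Fin N → ℝ | ∀ i j : Fin N, i < j → ε ≤ x j - x i} ∩
        {x : Fin N → ℝ | ∀ k, |x k| ≤ R} := by
      ext x; simp [hKdef, Set.mem_setOf_eq]
    rw [this]
    exact h1.inter h2
  have hKbd : Bornology.IsBounded K := by
    refine (Metric.isBounded_closedBall (x := (0 : Fin N → ℝ)) (r := R)).subset ?_
    intro x hx
    rw [Metric.mem_closedBall]
    rw [dist_pi_le_iff hR0]
    intro k
    rw [Pi.zero_apply, Real.dist_0_eq_abs]
    exact hx.2 k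
  have hKcomp : IsCompact K := Metric.isCompact_of_isClosed_isBounded hKcl hKbd
  have hgap0 : ∀ x ∈ K, ∀ i j : Fin N, i < j → 0 < x j - x i :=
    fun x hx i j hij => lt_of_lt_of_le hεpos (hx.1 i j hij)
  have hVcont : ContinuousOn (Vfun N c σ) K := by
    intro x hx
    apply ContinuousAt.continuousWithinAt
    apply ContinuousAt.add
    · exact ((continuous_finset_sum univ fun i _ =>
        (continuous_apply i).pow 2).div_const 2).continuousAt
    · refine tendsto_finset_sum _ fun i _ => tendsto_finset_sum _ fun j hj => ?_
      have hij : i < j := by simpa using hj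
      have h1 : ContinuousAt (fun y : Fin N → ℝ => y j - y i) x :=
        ((continuous_apply j).sub (continuous_apply i)).continuousAt
      exact ContinuousAt.comp (x := x) (g := flW c σ)
        (W_hasDerivAt c σ (hgap0 x hx i j hij)).continuousAt h1
  obtain ⟨β, hβK, hminOn⟩ := hKcomp.exists_isMinOn ⟨b₀, hb₀K⟩ hVcont
  have hmin : ∀ y ∈ K, Vfun N c σ β ≤ Vfun N c σ y := fun y hy => hminOn hy
  have hβgap0 : ∀ i j : Fin N, i < j → 0 < β j - β i := hgap0 β hβK
  have hVβE : Vfun N c σ β ≤ E := by rw [hEdef]; exact hmin b₀ hb₀K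
  -- coordinate bound
  have hMR₀ : ∑ i, |β i| ≤ R₀ := by
    set M : ℝ := ∑ i, |β i| with hM
    have hM0 : 0 ≤ M := Finset.sum_nonneg (fun i _ => abs_nonneg _)
    have hco := coerc N hN0 c σ B hB hflW β hβgap0
    have hEabs : E ≤ |E| := le_abs_self E
    have hsq : M^2 ≤ P + Q*M := by
      have h2N : (0:ℝ) < 2*N := by positivity
      have h1 : M^2/(2*N) ≤ |E| + B*N^2*(1+2*M) := by linarith
      have h2 := (div_le_iff₀ h2N).mp h1
      have he : (|E| + B*(N:ℝ)^2*(1+2*M)) * (2*N) = P + Q*M := by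
        rw [hPdef, hQdef]; ring
      linarith
    by_contra hcon
    push_neg at hcon
    rw [hR₀def] at hcon
    have hM1 : 1 ≤ M := by linarith
    have h2 : (P+Q+1)*M ≤ M*M := mul_le_mul_of_nonneg_right hcon.le hM0
    have h2' : M*M = M^2 := (sq M).symm
    have h3 : P ≤ P*M := by simpa using mul_le_mul_of_nonneg_left hM1 hP0
    have h4 : (P+Q+1)*M = P*M + Q*M + M := by ring
    linarith
  have hcoord : ∀ k, |β k| ≤ R₀ := by
    intro k
    exact le_trans (Finset.single_le_sum (fun i _ => abs_nonneg (β i)) (Finset.mem_univ k)) hMR₀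
  -- strict gap bound via descent direction
  have hsgap : ∀ i j : Fin N, i < j → ε < β j - β i := by
    by_contra hcon
    push_neg at hcon
    obtain ⟨i, j, hij, hle⟩ := hcon
    have hgeq : β j - β i = ε := le_antisymm hle (hβK.1 i j hij)
    set v : Fin N → ℝ := fun m => if i < m then (1:ℝ) else 0 with hvdef
    have hv01 : ∀ m, 0 ≤ v m ∧ v m ≤ 1 := by
      intro m; rw [hvdef]; dsimp only; split_ifs <;> norm_num
    have hvmono : ∀ a b : Fin N, a ≤ b → v a ≤ v b := by
      intro a b hab
      by_cases h1 : i < a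
      · have h2 : i < b := lt_of_lt_of_le h1 hab
        simp [hvdef, h1, h2]
      · by_cases h2 : i < b
        · simp [hvdef, h1, h2]
        · simp [hvdef, h1, h2]
    clear_value v
    have hD := V_hasDerivAt N c σ β v hβgap0
    set L : ℝ := (∑ m, β m * v m) +
        ∑ a, ∑ b ∈ univ.filter (fun b => a < b), (-c * (β b - β a) ^ (-σ)) * (v b - v a)
      with hLdef
    have hL1 : (∑ m, β m * v m) ≤ R₀ := by
      calc ∑ m, β m * v m ≤ ∑ m, |β m| := by
            refine Finset.sum_le_sum (fun m _ => ?_)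
            calc β m * v m ≤ |β m| * v m :=
                  mul_le_mul_of_nonneg_right (le_abs_self _) (hv01 m).1
              _ ≤ |β m| * 1 := mul_le_mul_of_nonneg_left (hv01 m).2 (abs_nonneg _)
              _ = |β m| := mul_one _
        _ ≤ R₀ := hMR₀
    have hTnonpos : ∀ a b : Fin N, a < b →
        (-c * (β b - β a) ^ (-σ)) * (v b - v a) ≤ 0 := by
      intro a b hab
      have h1 : 0 < (β b - β a) ^ (-σ) := Real.rpow_pos_of_pos (hβgap0 a b hab) _
      have h2 : 0 ≤ v b - v a := sub_nonneg.mpr (hvmono a b hab.le)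
      have h3 : -c * (β b - β a) ^ (-σ) ≤ 0 := by nlinarith
      exact mul_nonpos_of_nonpos_of_nonneg h3 h2
    have hinner_nonpos : ∀ a : Fin N,
        ∑ b ∈ univ.filter (fun b => a < b), (-c * (β b - β a) ^ (-σ)) * (v b - v a) ≤ 0 :=
      fun a => Finset.sum_nonpos (fun b hb => hTnonpos a b (by simpa using hb))
    have hPij : (-c * (β j - β i) ^ (-σ)) * (v j - v i) = -D := by
      have hvj : v j = 1 := by rw [hvdef]; simp [hij]
      have hvi : v i = 0 := by rw [hvdef]; simp
      rw [hvj, hvi, hgeq, sub_zero, mul_one, ← hkey]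
      ring
    have hsum2 : ∑ a, ∑ b ∈ univ.filter (fun b => a < b),
        (-c * (β b - β a) ^ (-σ)) * (v b - v a) ≤ -D := by
      have hjmem : j ∈ univ.filter (fun b => i < b) := by simp [hij]
      have hin := Finset.add_sum_erase (univ.filter (fun b => i < b))
        (fun b => (-c * (β b - β i) ^ (-σ)) * (v b - v i)) hjmem
      have hrest : ∑ b ∈ (univ.filter (fun b => i < b)).erase j,
          (-c * (β b - β i) ^ (-σ)) * (v b - v i) ≤ 0 := by
        refine Finset.sum_nonpos (fun b hb => ?_)
        have hb' := Finset.mem_of_mem_erase hb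
        exact hTnonpos i b (by simpa using hb')
      have hstep1 : ∑ b ∈ univ.filter (fun b => i < b),
          (-c * (β b - β i) ^ (-σ)) * (v b - v i) ≤ -D := by
        rw [← hin]
        rw [hPij]
        linarith
      have hout := Finset.add_sum_erase (univ : Finset (Fin N))
        (fun a => ∑ b ∈ univ.filter (fun b => a < b),
          (-c * (β b - β a) ^ (-σ)) * (v b - v a)) (Finset.mem_univ i)
      have hrest2 : ∑ a ∈ univ.erase i, ∑ b ∈ univ.filter (fun b => a < b),
          (-c * (β b - β a) ^ (-σ)) * (v b - v a) ≤ 0 :=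
        Finset.sum_nonpos (fun a _ => hinner_nonpos a)
      rw [← hout]
      linarith
    have hR₀N : R₀ ≤ (N:ℝ) * R₀ := by nlinarith
    have hLneg : L < 0 := by
      rw [hLdef]
      linarith [hL1, hsum2, hR₀N, hc, hDdef.ge, hDdef.le]
    -- minimality along the segment
    set φ : ℝ → ℝ := fun t => Vfun N c σ (β + t • v) with hφdef
    have hφmin : ∀ t : ℝ, 0 ≤ t → t ≤ 1 → φ 0 ≤ φ t := by
      intro t ht0 ht1
      have h00 : β + (0:ℝ) • v = β := by simp
      rw [hφdef]
      dsimp only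
      rw [h00]
      refine hmin _ ⟨?_, ?_⟩
      · intro a b hab
        have h1 : (β + t • v) b - (β + t • v) a = (β b - β a) + t * (v b - v a) := by
          simp only [Pi.add_apply, Pi.smul_apply, smul_eq_mul]; ring
        rw [h1]
        have h2 : 0 ≤ v b - v a := sub_nonneg.mpr (hvmono a b hab.le)
        have h3 := hβK.1 a b hab
        nlinarith
      · intro k
        have h1 : (β + t • v) k = β k + t * v k := by
          simp only [Pi.add_apply, Pi.smul_apply, smul_eq_mul]
        rw [h1]
        have habs2 : |t * v k| ≤ 1 := by
          rw [abs_mul, abs_of_nonneg ht0, abs_of_nonneg (hv01 k).1]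
          calc t * v k ≤ 1 * 1 :=
            mul_le_mul ht1 (hv01 k).2 (hv01 k).1 (by norm_num)
          _ = 1 := by norm_num
        calc |β k + t * v k| ≤ |β k| + |t * v k| := abs_add_le _ _
          _ ≤ R₀ + 1 := add_le_add (hcoord k) habs2
          _ ≤ R := by rw [hRdef]; linarith
    have hslope := hasDerivAt_iff_tendsto_slope.mp hD
    have hmono : 𝓝[>] (0:ℝ) ≤ 𝓝[≠] (0:ℝ) :=
      nhdsWithin_mono 0 (fun x hx => ne_of_gt hx)
    have hlt : ∀ᶠ t in 𝓝[>] (0:ℝ), slope φ 0 t < 0 :=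
      (hslope.mono_left hmono).eventually_lt_const hLneg
    have h01 : ∀ᶠ t in 𝓝[>] (0:ℝ), t ∈ Set.Ioo (0:ℝ) 1 :=
      Ioo_mem_nhdsGT zero_lt_one
    obtain ⟨t, hts, ht01⟩ := (hlt.and h01).exists
    have ht0 : 0 < t := ht01.1
    have hφt : φ t < φ 0 := by
      rw [slope_def_field] at hts
      rw [sub_zero] at hts
      rcases div_neg_iff.mp hts with ⟨_, h⟩ | ⟨h, _⟩
      · linarith
      · linarith
    exact absurd (hφmin t ht0.le ht01.2.le) (by linarith)
  -- β is a local minimum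
  have hcoordlt : ∀ k, |β k| < R := fun k =>
    lt_of_le_of_lt (hcoord k) (by rw [hRdef]; linarith)
  have hKnhds : K ∈ 𝓝 β := by
    have hUopen : IsOpen {x : Fin N → ℝ |
        (∀ i j : Fin N, i < j → ε < x j - x i) ∧ ∀ k, |x k| < R} := by
      rw [Set.setOf_and]
      apply IsOpen.inter
      · have he : {x : Fin N → ℝ | ∀ i j : Fin N, i < j → ε < x j - x i} =
            ⋂ i, ⋂ j, {x : Fin N → ℝ | i < j → ε < x j - x i} := by
          ext x; simp [Set.mem_iInter]
        rw [he]
        refine isOpen_iInter_of_finite fun i => isOpen_iInter_of_finite fun j => ?_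
        by_cases hij : i < j
        · simp only [hij, true_implies]
          exact isOpen_lt continuous_const ((continuous_apply j).sub (continuous_apply i))
        · simp only [hij, false_implies, Set.setOf_true]
          exact isOpen_univ
      · have he : {x : Fin N → ℝ | ∀ k, |x k| < R} = ⋂ k, {x : Fin N → ℝ | |x k| < R} := by
          ext x; simp [Set.mem_iInter]
        rw [he]
        exact isOpen_iInter_of_finite fun k =>
          isOpen_lt ((continuous_apply k).abs) continuous_const
    refine mem_nhds_iff.mpr ⟨_, ?_, hUopen, ⟨fun i j hij => hsgap i j hij, hcoordlt⟩⟩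
    intro x hx
    exact ⟨fun i j hij => (hx.1 i j hij).le, fun k => (hx.2 k).le⟩
  have hloc : IsLocalMin (Vfun N c σ) β := by
    show ∀ᶠ x in nhds β, Vfun N c σ β ≤ Vfun N c σ x
    filter_upwards [hKnhds] with y hy using hmin y hy
  -- first order conditions
  have heqn : ∀ i, β i = c * ∑ j ∈ univ.erase i, (β i - β j) / |β i - β j| ^ (1+σ) := by
    intro i
    set w : Fin N → ℝ := Pi.single i (1:ℝ) with hwdef
    have hgc : ContinuousAt (fun t : ℝ => β + t • w) 0 :=
      (continuous_const.add (continuous_id.smul continuous_const)).continuousAt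
    have hlm : IsLocalMin (fun t : ℝ => Vfun N c σ (β + t • w)) 0 := by
      have h0 : β + (0:ℝ) • w = β := by simp
      have := IsLocalMin.comp_continuous (f := Vfun N c σ)
        (g := fun t : ℝ => β + t • w) (b := (0:ℝ)) (by simpa using hloc) hgc
      exact this
    have hDer := V_hasDerivAt N c σ β w hβgap0
    have hz := hlm.hasDerivAt_eq_zero hDer
    have hw : ∀ m, w m = if m = i then 1 else 0 := fun m => by
      rw [hwdef]; exact Pi.single_apply i 1 m
    have h1 : (∑ m, β m * w m) = β i := by
      calc ∑ m, β m * w m = ∑ m, (if m = i then β m else 0) :=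
            Finset.sum_congr rfl (fun m _ => by rw [hw m]; split_ifs <;> ring)
        _ = β i := by simp
    set S1 : ℝ := ∑ a ∈ univ.filter (fun a => a < i), (-c * (β i - β a) ^ (-σ)) with hS1def
    set S2 : ℝ := ∑ b ∈ univ.filter (fun b => i < b), (-c * (β b - β i) ^ (-σ)) with hS2def
    have h2 : ∀ a : Fin N,
        (∑ b ∈ univ.filter (fun b => a < b), (-c * (β b - β a) ^ (-σ)) * (w b - w a))
        = (if a < i then (-c * (β i - β a) ^ (-σ)) else 0)
          - (if a = i then (∑ b ∈ univ.filter (fun b => a < b),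
              (-c * (β b - β a) ^ (-σ))) else 0) := by
      intro a
      have e1 : ∀ b, (-c * (β b - β a) ^ (-σ)) * (w b - w a)
          = ((if b = i then (-c * (β b - β a) ^ (-σ)) else 0)
             - (-c * (β b - β a) ^ (-σ)) * w a) := by
        intro b; rw [hw b]; split_ifs <;> ring
      rw [Finset.sum_congr rfl (fun b _ => e1 b), Finset.sum_sub_distrib]
      congr 1
      · rw [Finset.sum_ite_eq' (univ.filter (fun b => a < b)) i
            (fun b => (-c * (β b - β a) ^ (-σ)))]
        simp only [Finset.mem_filter, Finset.mem_univ, true_and]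
      · rw [← Finset.sum_mul, hw a]
        split_ifs <;> ring
    have h3 : (∑ a, ∑ b ∈ univ.filter (fun b => a < b),
        (-c * (β b - β a) ^ (-σ)) * (w b - w a)) = S1 - S2 := by
      rw [Finset.sum_congr rfl (fun a _ => h2 a), Finset.sum_sub_distrib]
      congr 1
      · rw [hS1def, Finset.sum_filter]
      · rw [Finset.sum_ite_eq' univ i (fun a => ∑ b ∈ univ.filter (fun b => a < b),
            (-c * (β b - β a) ^ (-σ)))]
        simp [hS2def]
    rw [h1, h3] at hz
    have h4 : c * ∑ j ∈ univ.erase i, (β i - β j) / |β i - β j| ^ (1+σ) = S2 - S1 := by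
      rw [erase_split N i, mul_add]
      have h5 : c * ∑ j ∈ univ.filter (fun j => j < i), (β i - β j) / |β i - β j| ^ (1+σ)
          = -S1 := by
        rw [hS1def, Finset.mul_sum, ← Finset.sum_neg_distrib]
        refine Finset.sum_congr rfl (fun j hj => ?_)
        have hji : j < i := by simpa using hj
        rw [fl_pos σ (hβgap0 j i hji)]
        ring
      have h6 : c * ∑ j ∈ univ.filter (fun j => i < j), (β i - β j) / |β i - β j| ^ (1+σ)
          = S2 := by
        rw [hS2def, Finset.mul_sum]
        refine Finset.sum_congr rfl (fun j hj => ?_)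
        have hij : i < j := by simpa using hj
        rw [show β i - β j = -(β j - β i) by ring, fl_neg, fl_pos σ (hβgap0 i j hij)]
        ring
      rw [h5, h6]
      ring
    rw [h4]
    linarith [hz]
  refine ⟨β, ?_, heqn⟩
  intro a b hab
  have := hβgap0 a b hab
  linarith

lemma rev_sum (N : ℕ) (i : Fin N) (G : Fin N → ℝ) :
    ∑ j ∈ univ.erase i, G j.rev = ∑ k ∈ univ.erase i.rev, G k := by
  refine Finset.sum_bij' (fun j _ => j.rev) (fun k _ => k.rev) ?_ ?_ ?_ ?_ ?_
  · intro j hj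
    rw [Finset.mem_erase] at hj ⊢
    refine ⟨fun h => hj.1 (by simpa using congrArg Fin.rev h), Finset.mem_univ _⟩
  · intro k hk
    rw [Finset.mem_erase] at hk ⊢
    refine ⟨fun h => hk.1 (by rw [← h, Fin.rev_rev]), Finset.mem_univ _⟩
  · intro j _; exact Fin.rev_rev j
  · intro k _; exact Fin.rev_rev k
  · intro j _; rfl

/-- Existence, uniqueness and symmetry of the strictly increasing solution `β` of the
stationary system `β_i = ((1+2s)γ/(2s)) Σ_{j≠i} (β_i-β_j)/|β_i-β_j|^{1+2s}`. -/
theorem stmt_1 (N : ℕ) (hN : 2 ≤ N) (s γ : ℝ) (hs0 : 0 < s) (hs1 : s < 1) (hγ : 0 < γ) :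
    ∃ β : Fin N → ℝ,
      (StrictMono β ∧ ∀ i, β i = ((1 + 2*s) * γ / (2*s)) *
          ∑ j ∈ Finset.univ.erase i, (β i - β j) / |β i - β j| ^ (1 + 2*s)) ∧
      (∀ β' : Fin N → ℝ,
        (StrictMono β' ∧ ∀ i, β' i = ((1 + 2*s) * γ / (2*s)) *
            ∑ j ∈ Finset.univ.erase i, (β' i - β' j) / |β' i - β' j| ^ (1 + 2*s)) →
        β' = β) ∧
      (∀ i : Fin N, β i = - β i.rev) := by
  set c : ℝ := (1 + 2*s) * γ / (2*s) with hcdef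
  have hc : 0 < c := by positivity
  set σ : ℝ := 2*s with hσdef
  have hσ : 0 < σ := by positivity
  have hexp : (1 + 2*s) = 1 + σ := by rw [hσdef]
  obtain ⟨β, hmono, heq⟩ := exists_sol N hN c σ hc hσ
  have heq' : ∀ i, β i = c * ∑ j ∈ univ.erase i, (β i - β j) / |β i - β j| ^ (1 + 2*s) := by
    intro i; rw [hexp]; exact heq i
  refine ⟨β, ⟨hmono, heq'⟩, ?_, ?_⟩
  · rintro β' ⟨hmono', heq2⟩
    refine uniq_sol N c σ hc hσ β β' hmono hmono' heq ?_
    intro i; rw [← hexp]; exact heq2 i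
  · -- symmetry via uniqueness applied to i ↦ -β i.rev
    set β'' : Fin N → ℝ := fun i => -β i.rev with hβ''def
    have hmono'' : StrictMono β'' := by
      intro a b hab
      rw [hβ''def]
      dsimp only
      have : b.rev < a.rev := by
        rw [Fin.lt_def] at *
        simp only [Fin.val_rev]
        omega
      have := hmono this
      linarith
    have heq'' : ∀ i, β'' i = c * ∑ j ∈ univ.erase i,
        (β'' i - β'' j) / |β'' i - β'' j| ^ (1+σ) := by
      intro i
      have hterm : ∀ j, (β'' i - β'' j) / |β'' i - β'' j| ^ (1+σ)
          = -((β i.rev - β j.rev) / |β i.rev - β j.rev| ^ (1+σ)) := by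
        intro j
        rw [hβ''def]
        dsimp only
        rw [show -β i.rev - -β j.rev = -(β i.rev - β j.rev) by ring, fl_neg]
      calc β'' i = -β i.rev := by rw [hβ''def]
        _ = -(c * ∑ k ∈ univ.erase i.rev, (β i.rev - β k) / |β i.rev - β k| ^ (1+σ)) := by
              rw [← heq i.rev]
        _ = c * ∑ j ∈ univ.erase i, -((β i.rev - β j.rev) / |β i.rev - β j.rev| ^ (1+σ)) := by
              rw [Finset.sum_neg_distrib]
              rw [rev_sum N i (fun k => (β i.rev - β k) / |β i.rev - β k| ^ (1+σ))]
              ring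
        _ = _ := by
              rw [Finset.sum_congr rfl (fun j _ => (hterm j).symm)]
    have hfin : β'' = β := uniq_sol N c σ hc hσ β β'' hmono hmono'' heq heq''
    intro i
    have := congrFun hfin i
    rw [hβ''def] at this
    dsimp only at this
    linarith
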